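/- Let ψ⁻ be a backward stationary solution and ψ⁺ be a forward stationary solution, and define Q^∞(x, n) = ψ⁻(x, n) − ψ⁺(x, n). Suppose η : (−∞, 0] → 𝕋^d is a backward minimizer for ψ⁻ at η(0): an absolutely continuous curve each compact restriction of which attains the action function between its endpoints, such that ψ⁻(η(0), 0) = ψ⁻(η(m), m) + A_{m,0}(η(m), η(0)) for every integer m < 0. Then Q^∞(η(j), j) ≤ Q^∞(η(k), k) for all integers j < k ≤ 0. -/

import Mathlib

open MeasureTheory

noncomputable section

/-- Euclidean space ℝ^d. -/
abbrev V (d : ℕ) := EuclideanSpace ℝ (Fin d)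

/-- The torus 𝕋^d = ℝ^d/ℤ^d, as a product of circles, with its quotient distance. -/
abbrev Torus (d : ℕ) := Fin d → AddCircle (1 : ℝ)

/-- The canonical projection ℝ^d → 𝕋^d. -/
def projT {d : ℕ} (x : V d) : Torus d := fun i => (x i : AddCircle (1 : ℝ))

/-- `ζ` is an absolutely continuous curve on `[s,t]` with (square-integrable)
derivative `g`. -/
def IsAC {d : ℕ} (ζ g : ℝ → V d) (s t : ℝ) : Prop :=
  IntegrableOn g (Set.Icc s t) ∧ IntegrableOn (fun τ => ‖g τ‖ ^ 2) (Set.Icc s t) ∧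
    ∀ τ ∈ Set.Icc s t, ζ τ = ζ s + ∫ u in s..τ, g u

/-- The action 𝔸(ζ) = ∫_s^t (½|ζ̇|² − b·ζ̇) dτ − Σ_{s ≤ j < t} F_j(ζ(j)) of the curve `ζ`
with derivative `g`, for the kicked potentials `F`. -/
def action {d : ℕ} (F : ℤ → Torus d → ℝ) (b : V d) (ζ g : ℝ → V d) (s t : ℝ) : ℝ :=
  (∫ τ in s..t, ((1 : ℝ) / 2 * ‖g τ‖ ^ 2 - (inner ℝ b (g τ) : ℝ))) -
    ∑ j ∈ Finset.Ico ⌈s⌉ ⌈t⌉, F j (projT (ζ (j : ℝ)))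

/-- The action function A_{s,t}(x,x') = inf over absolutely continuous curves from
`x` to `x'`. -/
def actFn {d : ℕ} (F : ℤ → Torus d → ℝ) (b : V d) (s t : ℝ) (x x' : Torus d) : ℝ :=
  sInf {a | ∃ ζ g : ℝ → V d, IsAC ζ g s t ∧ projT (ζ s) = x ∧ projT (ζ t) = x' ∧
    action F b ζ g s t = a}

/-- The backward Lax–Oleinik operator K_{s,t}φ(x) = min_y (φ(y) + A_{s,t}(y,x)), with
the convention K_{s,s}φ = φ. -/
def KOp {d : ℕ} (F : ℤ → Torus d → ℝ) (b : V d) (s t : ℝ) (φ : Torus d → ℝ) :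
    Torus d → ℝ :=
  if s < t then fun x => sInf {a | ∃ y : Torus d, a = φ y + actFn F b s t y x} else φ

/-- The forward Lax–Oleinik operator Ǩ_{s,t}φ(x) = max_y (φ(y) − A_{s,t}(x,y)), with
the convention Ǩ_{s,s}φ = φ. -/
def KChk {d : ℕ} (F : ℤ → Torus d → ℝ) (b : V d) (s t : ℝ) (φ : Torus d → ℝ) :
    Torus d → ℝ :=
  if s < t then fun x => sSup {a | ∃ y : Torus d, a = φ y - actFn F b s t x y} else φ

/-- The seminorm ‖ψ‖_* = min_C sup_x |ψ(x) − C|. -/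
def starNorm {d : ℕ} (ψ : Torus d → ℝ) : ℝ := ⨅ C : ℝ, ⨆ x : Torus d, |ψ x - C|

/-- A minimizer for `K_{m,n}φ` at its terminal point `ζ(n)`. -/
def IsMinimizer {d : ℕ} (F : ℤ → Torus d → ℝ) (b : V d) (m n : ℤ) (φ : Torus d → ℝ)
    (ζ g : ℝ → V d) : Prop :=
  IsAC ζ g m n ∧
    KOp F b m n φ (projT (ζ (n : ℝ))) = φ (projT (ζ (m : ℝ))) + action F b ζ g m n

/-- A curve attaining `Ǩ_{m,n}φ` at its initial point `ζ(m)`. -/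
def IsMaximizer {d : ℕ} (F : ℤ → Torus d → ℝ) (b : V d) (m n : ℤ) (φ : Torus d → ℝ)
    (ζ g : ℝ → V d) : Prop :=
  IsAC ζ g m n ∧
    KChk F b m n φ (projT (ζ (m : ℝ))) = φ (projT (ζ (n : ℝ))) - action F b ζ g m n

/-- A backward stationary solution. -/
def IsBackwardSol {d : ℕ} (F : ℤ → Torus d → ℝ) (b : V d) (ψ : Torus d → ℤ → ℝ) : Prop :=
  (∀ n : ℤ, Continuous fun x => ψ x n) ∧
    ∀ m n : ℤ, m < n → ∀ x, KOp F b m n (fun y => ψ y m) x = ψ x n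

/-- A forward stationary solution. -/
def IsForwardSol {d : ℕ} (F : ℤ → Torus d → ℝ) (b : V d) (ψ : Torus d → ℤ → ℝ) : Prop :=
  (∀ n : ℤ, Continuous fun x => ψ x n) ∧
    ∀ m n : ℤ, m < n → ∀ x, KChk F b m n (fun y => ψ y n) x = ψ x m

/-- `ζ` is affine on each interval `[j-1, j]` with (left) velocity `v j`. -/
def AffineOnUnit {d : ℕ} (ζ : ℝ → V d) (v : ℤ → V d) (m n : ℤ) : Prop :=
  ∀ j : ℤ, m < j → j ≤ n → ∀ τ ∈ Set.Icc ((j : ℝ) - 1) (j : ℝ),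
    ζ τ = ζ (j : ℝ) + (τ - (j : ℝ)) • v j


/-!
Along the backward minimizer `η` the function `ψ⁻` is calibrated: since the action of `η` is
additive and `η` attains the action function on every compact interval, the identities
`ψ⁻(η(0),0) = ψ⁻(η(m),m) + A_{m,0}` for `m = j` and `m = k` give
`ψ⁻(η(k),k) = ψ⁻(η(j),j) + A_{j,k}(η(j),η(k))`. On the other hand every forward solution is
sub-calibrated along any pair of points, `ψ⁺(y,k) - A_{j,k}(x,y) ≤ ψ⁺(x,j)`, because `Ǩ` is a
maximum over `y`. Subtracting the two gives `Q^∞(η(j),j) ≤ Q^∞(η(k),k)`.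
-/

open Set

section KickedAction

variable {d : ℕ}

theorem isOpenQuotientMap_projT : IsOpenQuotientMap (projT : V d → Torus d) :=
  (IsOpenQuotientMap.piMap fun _ => QuotientAddGroup.isOpenQuotientMap_mk).comp
    (PiLp.homeomorph 2 fun _ : Fin d => ℝ).isOpenQuotientMap

theorem bddAbove_range_of_continuous_comp_projT {f : Torus d → ℝ}
    (hf : Continuous (f ∘ projT)) : BddAbove (range f) :=
  (isCompact_range (isOpenQuotientMap_projT.continuous_comp_iff.mp hf)).bddAbove

theorem neg_half_sq_le_half_sq_sub_inner {E : Type*} [NormedAddCommGroup E]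
    [InnerProductSpace ℝ E] (b v : E) :
    -(‖b‖ ^ 2 / 2) ≤ 1 / 2 * ‖v‖ ^ 2 - inner ℝ b v := by
  nlinarith [norm_sub_sq_real v b, sq_nonneg ‖v - b‖, real_inner_comm b v]

variable (F : ℤ → Torus d → ℝ) (b : V d)

theorem integrableOn_lagrangian_of_isAC {ζ g : ℝ → V d} {s t : ℝ} (hg : IsAC ζ g s t) :
    IntegrableOn (fun τ => (1 : ℝ) / 2 * ‖g τ‖ ^ 2 - inner ℝ b (g τ)) (Icc s t) :=
  (hg.2.1.const_mul _).sub ((innerSL ℝ b).integrable_comp hg.1)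

theorem action_add {ζ g : ℝ → V d} {r s t : ℝ} (hrs : r ≤ s) (hst : s ≤ t)
    (hg : IsAC ζ g r t) :
    action F b ζ g r t = action F b ζ g r s + action F b ζ g s t := by
  have hL := integrableOn_lagrangian_of_isAC b hg
  have hI := intervalIntegral.integral_add_adjacent_intervals
    ((intervalIntegrable_iff_integrableOn_Icc_of_le hrs).2
      (hL.mono_set (Icc_subset_Icc le_rfl hst)))
    ((intervalIntegrable_iff_integrableOn_Icc_of_le hst).2
      (hL.mono_set (Icc_subset_Icc hrs le_rfl)))
  have hS := Finset.sum_union (f := fun j => F j (projT (ζ (j : ℝ))))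
    (Finset.Ico_disjoint_Ico_consecutive ⌈r⌉ ⌈s⌉ ⌈t⌉)
  rw [Finset.Ico_union_Ico_eq_Ico (Int.ceil_le_ceil hrs) (Int.ceil_le_ceil hst)] at hS
  simp only [action, ← hI, hS]
  ring

variable {F}

theorem exists_le_action (hF : ∀ j, BddAbove (range (F j))) {s t : ℝ} (hst : s ≤ t) :
    ∃ C : ℝ, ∀ ζ g : ℝ → V d, IsAC ζ g s t → C ≤ action F b ζ g s t := by
  choose M hM using hF
  refine ⟨-((t - s) * ‖b‖ ^ 2 / 2) - ∑ j ∈ Finset.Ico ⌈s⌉ ⌈t⌉, M j, fun ζ g hg => ?_⟩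
  have hkinetic : -((t - s) * ‖b‖ ^ 2 / 2) ≤
      ∫ τ in s..t, ((1 : ℝ) / 2 * ‖g τ‖ ^ 2 - inner ℝ b (g τ)) := by
    simpa using intervalIntegral.integral_mono_on hst intervalIntegrable_const
      ((intervalIntegrable_iff_integrableOn_Icc_of_le hst).2
        (integrableOn_lagrangian_of_isAC b hg))
      fun τ _ => neg_half_sq_le_half_sq_sub_inner b (g τ)
  have hpotential : ∑ j ∈ Finset.Ico ⌈s⌉ ⌈t⌉, F j (projT (ζ (j : ℝ))) ≤
      ∑ j ∈ Finset.Ico ⌈s⌉ ⌈t⌉, M j :=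
    Finset.sum_le_sum fun j _ => hM j (mem_range_self _)
  unfold action
  linarith

theorem exists_le_actFn (hF : ∀ j, BddAbove (range (F j))) {s t : ℝ} (hst : s ≤ t) :
    ∃ C : ℝ, ∀ x x' : Torus d, C ≤ actFn F b s t x x' := by
  obtain ⟨C, hC⟩ := exists_le_action b hF hst
  -- `min C 0` also bounds `sInf ∅ = 0`, so no connecting curve is needed
  refine ⟨min C 0, fun x x' => Real.le_sInf ?_ (min_le_right _ _)⟩
  rintro _ ⟨ζ, g, hg, -, -, rfl⟩
  exact min_le_of_left_le (hC ζ g hg)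

theorem sub_actFn_le_of_isForwardSol {ψ : Torus d → ℤ → ℝ}
    (hF : ∀ j, BddAbove (range (F j)))
    (hψ : IsForwardSol F b ψ) {m n : ℤ} (hmn : m < n) (x y : Torus d) :
    ψ y n - actFn F b m n x y ≤ ψ x m := by
  have hmnR : (m : ℝ) < n := by exact_mod_cast hmn
  obtain ⟨C, hC⟩ := exists_le_actFn b hF hmnR.le
  obtain ⟨M, hM⟩ := (isCompact_range (hψ.1 n)).bddAbove
  rw [← hψ.2 m n hmn x, KChk, if_pos hmnR]
  refine le_csSup ⟨M - C, ?_⟩ ⟨y, rfl⟩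
  rintro _ ⟨z, rfl⟩
  exact sub_le_sub (hM (mem_range_self z)) (hC x z)

theorem eq_add_actFn_of_backward_minimizer {ψ : Torus d → ℤ → ℝ} {ζ g : ℝ → V d}
    (hattain : ∀ a c : ℝ, a < c → c ≤ 0 → IsAC ζ g a c ∧
      action F b ζ g a c = actFn F b a c (projT (ζ a)) (projT (ζ c)))
    (hback : ∀ m : ℤ, m < 0 →
      ψ (projT (ζ 0)) 0 = ψ (projT (ζ (m : ℝ))) m +
        actFn F b m 0 (projT (ζ (m : ℝ))) (projT (ζ 0)))
    {j k : ℤ} (hjk : j < k) (hk : k ≤ 0) :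
    ψ (projT (ζ (k : ℝ))) k =
      ψ (projT (ζ (j : ℝ))) j + actFn F b j k (projT (ζ (j : ℝ))) (projT (ζ (k : ℝ))) := by
  have hjkR : (j : ℝ) < k := by exact_mod_cast hjk
  rcases hk.lt_or_eq with hk | rfl
  · have hkR : (k : ℝ) < 0 := by exact_mod_cast hk
    have hadd := action_add F b hjkR.le hkR.le (hattain j 0 (hjkR.trans hkR) le_rfl).1
    rw [(hattain j 0 (hjkR.trans hkR) le_rfl).2, (hattain j k hjkR hkR.le).2,
      (hattain k 0 hkR le_rfl).2] at hadd
    linarith [hback j (hjk.trans hk), hback k hk]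
  · simpa using hback j hjk

end KickedAction

theorem statement19_general {d : ℕ} (F : ℤ → Torus d → ℝ)
    (hF : ∀ j : ℤ, ContDiff ℝ 2 fun x : V d => F j (projT x)) (b : V d)
    (ψm ψp : Torus d → ℤ → ℝ)
    (hψp : IsForwardSol F b ψp)
    (ζ g : ℝ → V d)
    -- η is an absolutely continuous curve on (−∞, 0], each compact restriction of
    -- which attains the action function between its endpoints:
    (hattain : ∀ a c : ℝ, a < c → c ≤ 0 → IsAC ζ g a c ∧
      action F b ζ g a c = actFn F b a c (projT (ζ a)) (projT (ζ c)))
    -- η is a backward minimizer for ψ⁻ at η(0):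
    (hback : ∀ m : ℤ, m < 0 →
      ψm (projT (ζ 0)) 0 = ψm (projT (ζ (m : ℝ))) m +
        actFn F b m 0 (projT (ζ (m : ℝ))) (projT (ζ 0))) :
    ∀ j k : ℤ, j < k → k ≤ 0 →
      ψm (projT (ζ (j : ℝ))) j - ψp (projT (ζ (j : ℝ))) j ≤
        ψm (projT (ζ (k : ℝ))) k - ψp (projT (ζ (k : ℝ))) k := by
  intro j k hjk hk
  have hFbdd : ∀ j, BddAbove (range (F j)) := fun j =>
    bddAbove_range_of_continuous_comp_projT (hF j).continuous
  have hcalib := eq_add_actFn_of_backward_minimizer b hattain hback hjk hk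
  have hsub := sub_actFn_le_of_isForwardSol b hFbdd hψp hjk (projT (ζ j)) (projT (ζ k))
  linarith

theorem statement19 {d : ℕ} (F : ℤ → Torus d → ℝ)
    (hF : ∀ j : ℤ, ContDiff ℝ 2 fun x : V d => F j (projT x)) (b : V d)
    (ψm ψp : Torus d → ℤ → ℝ)
    (hψm : IsBackwardSol F b ψm) (hψp : IsForwardSol F b ψp)
    (ζ g : ℝ → V d)
    -- η is an absolutely continuous curve on (−∞, 0], each compact restriction of
    -- which attains the action function between its endpoints:
    (hattain : ∀ a c : ℝ, a < c → c ≤ 0 → IsAC ζ g a c ∧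
      action F b ζ g a c = actFn F b a c (projT (ζ a)) (projT (ζ c)))
    -- η is a backward minimizer for ψ⁻ at η(0):
    (hback : ∀ m : ℤ, m < 0 →
      ψm (projT (ζ 0)) 0 = ψm (projT (ζ (m : ℝ))) m +
        actFn F b m 0 (projT (ζ (m : ℝ))) (projT (ζ 0))) :
    ∀ j k : ℤ, j < k → k ≤ 0 →
      ψm (projT (ζ (j : ℝ))) j - ψp (projT (ζ (j : ℝ))) j ≤
        ψm (projT (ζ (k : ℝ))) k - ψp (projT (ζ (k : ℝ))) k :=
  statement19_general F hF b ψm ψp hψp ζ g hattain hback
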